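/- arXiv:2302.14174 — 4 statements merged into one kernel-verified Lean document; each statement's English description precedes it below -/
import Mathlib

section
/- Let θ, φ ∈ ℝ with sin θ ≠ 0. The four vectors ζ̂¹ = (−1, 1, 0, 0), ζ̂² = (−1, cos θ, sin θ sin φ, −sin θ cos φ), ζ̂³ = (−1, cos θ, −sin θ sin φ, sin θ cos φ), ζ̂⁴ = (−1, cos θ, sin θ cos φ, sin θ sin φ) in ℝ⁴ are all lightlike for the Minkowski form η and are linearly independent; consequently they span ℝ⁴, and in particular the lightlike vector ζ = (−1, 0, cos φ, sin φ) is a linear combination of ζ̂¹, ζ̂², ζ̂³, ζ̂⁴. (This is the explicit choice of four lightlike covectors used in the fourth-order linearization, Section 5.2.) -/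
/-!
The matrix with rows ζ̂¹, …, ζ̂⁴ has determinant 2 (cos θ − 1) sin² θ, which is nonzero as soon as
sin θ ≠ 0 (then also cos θ ≠ 1). So the four vectors form a basis of ℝ⁴, and ζ, like any vector,
is a combination of them. Lightlikeness of each vector reduces to sin² + cos² = 1.
-/

/-- The Minkowski bilinear form η(x, y) = −x₀y₀ + x₁y₁ + x₂y₂ + x₃y₃ on ℝ⁴. -/
def minkowski (x y : Fin 4 → ℝ) : ℝ :=
  -(x 0 * y 0) + x 1 * y 1 + x 2 * y 2 + x 3 * y 3

/-- A vector is lightlike if it is nonzero and η(x, x) = 0. -/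
def IsLightlike (x : Fin 4 → ℝ) : Prop :=
  x ≠ 0 ∧ minkowski x x = 0

theorem isLightlike_iff_of_ne_zero {x : Fin 4 → ℝ} (hx : x 0 ≠ 0) :
    IsLightlike x ↔ x 1 ^ 2 + x 2 ^ 2 + x 3 ^ 2 = x 0 ^ 2 := by
  rw [IsLightlike, minkowski, and_iff_right fun h => hx (congrFun h 0)]
  constructor <;> intro h <;> linear_combination h

theorem isLightlike_neg_one_cons {a b c : ℝ} (h : a ^ 2 + b ^ 2 + c ^ 2 = 1) :
    IsLightlike ![-1, a, b, c] :=
  (isLightlike_iff_of_ne_zero (by simp)).2 (by simpa using h)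

theorem det_of_lightlike_frame (c s a b : ℝ) :
    (Matrix.of ![![-1, 1, 0, 0], ![-1, c, s * a, -(s * b)], ![-1, c, -(s * a), s * b],
      ![-1, c, s * b, s * a]]).det = 2 * (c - 1) * s ^ 2 * (a ^ 2 + b ^ 2) := by
  simp [Matrix.det_succ_row_zero, Fin.sum_univ_succ, Fin.succAbove]
  ring

theorem cos_ne_one_of_sin_ne_zero {θ : ℝ} (h : Real.sin θ ≠ 0) : Real.cos θ ≠ 1 := by
  intro hc
  exact h (by simpa [hc] using Real.sin_sq_add_cos_sq θ)

/-- The explicit choice of four lightlike covectors used in the fourth-order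
linearization (Section 5.2): four lightlike, linearly independent vectors
spanning ℝ⁴, so that the lightlike vector ζ lies in their span. -/
theorem four_lightlike_linearly_independent
    (θ φ : ℝ) (hθ : Real.sin θ ≠ 0) :
    let ζ₁ : Fin 4 → ℝ := ![-1, 1, 0, 0]
    let ζ₂ : Fin 4 → ℝ :=
      ![-1, Real.cos θ, Real.sin θ * Real.sin φ, -(Real.sin θ * Real.cos φ)]
    let ζ₃ : Fin 4 → ℝ :=
      ![-1, Real.cos θ, -(Real.sin θ * Real.sin φ), Real.sin θ * Real.cos φ]
    let ζ₄ : Fin 4 → ℝ :=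
      ![-1, Real.cos θ, Real.sin θ * Real.cos φ, Real.sin θ * Real.sin φ]
    let ζ : Fin 4 → ℝ := ![-1, 0, Real.cos φ, Real.sin φ]
    (IsLightlike ζ₁ ∧ IsLightlike ζ₂ ∧ IsLightlike ζ₃ ∧ IsLightlike ζ₄) ∧
    LinearIndependent ℝ ![ζ₁, ζ₂, ζ₃, ζ₄] ∧
    Submodule.span ℝ {ζ₁, ζ₂, ζ₃, ζ₄} = ⊤ ∧
    (IsLightlike ζ ∧ ∃ a₁ a₂ a₃ a₄ : ℝ, ζ = a₁ • ζ₁ + a₂ • ζ₂ + a₃ • ζ₃ + a₄ • ζ₄) := by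
  intro ζ₁ ζ₂ ζ₃ ζ₄ ζ
  have hθ' := Real.sin_sq_add_cos_sq θ
  have hφ := Real.sin_sq_add_cos_sq φ
  have hdet : IsUnit ((Pi.basisFun ℝ (Fin 4)).det ![ζ₁, ζ₂, ζ₃, ζ₄]) := by
    rw [Pi.basisFun_det_apply, det_of_lightlike_frame, hφ, isUnit_iff_ne_zero]
    have := sub_ne_zero.2 (cos_ne_one_of_sin_ne_zero hθ)
    positivity
  obtain ⟨hli, hspan⟩ := (Module.Basis.is_basis_iff_det _).2 hdet
  obtain ⟨a, ha⟩ := (Submodule.mem_span_range_iff_exists_fun ℝ).1 (hspan ▸ Submodule.mem_top (x := ζ))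
  rw [Matrix.range_cons, Matrix.range_cons, Matrix.range_cons, Matrix.range_cons_empty] at hspan
  simp only [Set.singleton_union] at hspan
  refine ⟨⟨?_, ?_, ?_, ?_⟩, hli, hspan, isLightlike_neg_one_cons (by linear_combination hφ),
    a 0, a 1, a 2, a 3, by simp [← ha, Fin.sum_univ_four]⟩
  · exact isLightlike_neg_one_cons (by norm_num)
  all_goals exact isLightlike_neg_one_cons (by linear_combination hθ' + Real.sin θ ^ 2 * hφ)
end

section
/- Let θ, φ ∈ ℝ. Set ζ̂ = (−1, −cos φ, sin φ, 0), ζ̂¹ = (−1, 1, 0, 0), ζ̂² = (−1, cos θ, sin θ, 0), ζ̂³ = (−1, cos θ, −sin θ, 0) in ℝ⁴, and define λ = 2 sin θ (1 − cos θ), α₁ = −2 sin θ (cos φ + cos θ), α₂ = (1 + cos φ) sin θ + (1 − cos θ) sin φ, α₃ = (1 + cos φ) sin θ − (1 − cos θ) sin φ. Then: (i) ζ̂, ζ̂¹, ζ̂², ζ̂³ are all lightlike for the Minkowski form η; (ii) λ·ζ̂ = α₁·ζ̂¹ + α₂·ζ̂² + α₃·ζ̂³; (iii) η(ζ̂¹,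 ζ̂²) = cos θ − 1, η(ζ̂¹, ζ̂³) = cos θ − 1, and η(ζ̂², ζ̂³) = 2(cos²θ − 1); (iv) if in addition sin θ ≠ 0, then ζ̂¹, ζ̂², ζ̂³ are linearly independent. (These are the explicit constructions and computations in the proof of Lemma 6.1.) -/
theorem minkowski_vecCons (a₀ a₁ a₂ a₃ b₀ b₁ b₂ b₃ : ℝ) :
    minkowski ![a₀, a₁, a₂, a₃] ![b₀, b₁, b₂, b₃] =
      -(a₀ * b₀) + a₁ * b₁ + a₂ * b₂ + a₃ * b₃ :=
  rfl

theorem isLightlike_vecCons {t a b c : ℝ} (ht : t ≠ 0) (h : a ^ 2 + b ^ 2 + c ^ 2 = t ^ 2) :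
    IsLightlike ![t, a, b, c] :=
  ⟨fun h0 ↦ ht (congrFun h0 0), by rw [minkowski_vecCons]; linear_combination h⟩

/-- `λ ζ̂ = α₁ ζ̂¹ + α₂ ζ̂² + α₃ ζ̂³` with `(c, s) = (cos θ, sin θ)` and `(c', s') = (cos φ, sin φ)`. -/
theorem smul_vec_eq_sum_smul (c s c' s' : ℝ) :
    (2 * s * (1 - c)) • ![-1, -c', s', 0] =
      (-2 * s * (c' + c)) • ![-1, 1, 0, 0] +
      ((1 + c') * s + (1 - c) * s') • ![-1, c, s, 0] +
      ((1 + c') * s - (1 - c) * s') • ![-1, c, -s, 0] := by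
  ext i
  fin_cases i <;> simp <;> ring

theorem linearIndependent_vecCons {c s : ℝ} (hs : s ≠ 0) (hc : c ≠ 1) :
    LinearIndependent ℝ ![![-1, 1, 0, 0], ![-1, c, s, 0], ![-1, c, -s, 0]] := by
  rw [Fintype.linearIndependent_iff]
  intro g hg
  have h0 : -g 0 + -g 1 + -g 2 = 0 := by simpa [Fin.sum_univ_three] using congrFun hg 0
  have h1 : g 0 + g 1 * c + g 2 * c = 0 := by simpa [Fin.sum_univ_three] using congrFun hg 1
  have h2 : g 1 * s + -(g 2 * s) = 0 := by simpa [Fin.sum_univ_three] using congrFun hg 2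
  have hg12 : g 1 = g 2 := by
    have : s * (g 1 - g 2) = 0 := by linear_combination h2
    linarith [(mul_eq_zero.mp this).resolve_left hs]
  have hg1 : g 1 = 0 := by
    have : (c - 1) * g 1 = 0 := by linear_combination (h0 + h1 + (c - 1) * hg12) / 2
    exact (mul_eq_zero.mp this).resolve_left (sub_ne_zero.mpr hc)
  intro i
  fin_cases i <;> simp <;> linarith

/-- The explicit constructions and computations in the proof of Lemma 6.1. -/
theorem lemma61_constructions (θ φ : ℝ) :
    let ζ : Fin 4 → ℝ := ![-1, -Real.cos φ, Real.sin φ, 0]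
    let ζ₁ : Fin 4 → ℝ := ![-1, 1, 0, 0]
    let ζ₂ : Fin 4 → ℝ := ![-1, Real.cos θ, Real.sin θ, 0]
    let ζ₃ : Fin 4 → ℝ := ![-1, Real.cos θ, -Real.sin θ, 0]
    let lam : ℝ := 2 * Real.sin θ * (1 - Real.cos θ)
    let α₁ : ℝ := -2 * Real.sin θ * (Real.cos φ + Real.cos θ)
    let α₂ : ℝ := (1 + Real.cos φ) * Real.sin θ + (1 - Real.cos θ) * Real.sin φ
    let α₃ : ℝ := (1 + Real.cos φ) * Real.sin θ - (1 - Real.cos θ) * Real.sin φ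
    (IsLightlike ζ ∧ IsLightlike ζ₁ ∧ IsLightlike ζ₂ ∧ IsLightlike ζ₃) ∧
    lam • ζ = α₁ • ζ₁ + α₂ • ζ₂ + α₃ • ζ₃ ∧
    (minkowski ζ₁ ζ₂ = Real.cos θ - 1 ∧
     minkowski ζ₁ ζ₃ = Real.cos θ - 1 ∧
     minkowski ζ₂ ζ₃ = 2 * (Real.cos θ ^ 2 - 1)) ∧
    (Real.sin θ ≠ 0 → LinearIndependent ℝ ![ζ₁, ζ₂, ζ₃]) := by
  intro ζ ζ₁ ζ₂ ζ₃ lam α₁ α₂ α₃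
  have hθ := Real.sin_sq_add_cos_sq θ
  have hφ := Real.sin_sq_add_cos_sq φ
  refine ⟨⟨?_, ?_, ?_, ?_⟩, smul_vec_eq_sum_smul _ _ _ _, ⟨?_, ?_, ?_⟩, fun hs ↦ ?_⟩
  · exact isLightlike_vecCons (by norm_num) (by linear_combination hφ)
  · exact isLightlike_vecCons (by norm_num) (by norm_num)
  · exact isLightlike_vecCons (by norm_num) (by linear_combination hθ)
  · exact isLightlike_vecCons (by norm_num) (by linear_combination hθ)
  · exact (minkowski_vecCons ..).trans (by ring)
  · exact (minkowski_vecCons ..).trans (by ring)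
  · exact (minkowski_vecCons ..).trans (by linear_combination -hθ)
  · exact linearIndependent_vecCons hs fun hc ↦ hs (Real.sin_eq_zero_iff_cos_eq.mpr (.inl hc))
end

section
/- Let θ, φ ∈ ℝ with sin θ ≠ 0 and cos φ + cos θ ≠ 0. Set ζ̂¹ = (−1, 1, 0, 0), ζ̂² = (−1, cos θ, sin θ, 0), ζ̂³ = (−1, cos θ, −sin θ, 0), α₁ = −2 sin θ (cos φ + cos θ), α₂ = (1 + cos φ) sin θ + (1 − cos θ) sin φ, α₃ = (1 + cos φ) sin θ − (1 − cos θ) sin φ, and assume α₂ ≠ 0 and α₃ ≠ 0. Put ζʲ = αⱼ·ζ̂ʲ for j = 1, 2, 3. Then η(ζʲ + ζᵏ, ζʲ + ζᵏ) ≠ 0 for all pairs j ≠ k, and I₃(ζ¹, ζ², ζ³) = −(2 cos θ + 1)/(2(cos φ + cos θ)). (This is the explicit evaluation of I₃ in the proof of Lemma 6.1, stated with the unordered-pair normalization of I₃.) -/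
/-- The quantity I₃ (unordered-pair normalization) from the proof of Lemma 6.1. -/
noncomputable def I3 (z₁ z₂ z₃ : Fin 4 → ℝ) : ℝ :=
  (z₁ 0 + z₂ 0 + z₃ 0) *
    ((z₁ 0 + z₂ 0) / minkowski (z₁ + z₂) (z₁ + z₂)
      + (z₁ 0 + z₃ 0) / minkowski (z₁ + z₃) (z₁ + z₃)
      + (z₂ 0 + z₃ 0) / minkowski (z₂ + z₃) (z₂ + z₃))

/-!
The three vectors ζ̂ʲ are the null vectors `n t = (-1, cos t, sin t, 0)` at the angles
`t = 0, θ, -θ`, and `η(n s, n t) = cos (s - t) - 1`. Since null vectors have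
`η(a u + b v, a u + b v) = 2 a b η(u, v)`, the denominators of I₃ are
`2 α₁ α₂ (cos θ - 1)`, `2 α₁ α₃ (cos θ - 1)` and `-4 α₂ α₃ sin² θ`, and I₃ becomes a rational
function of the αⱼ. It depends on α₂, α₃ only through `α₂⁻¹ + α₃⁻¹`, which the explicit values of
`α₂ + α₃` and `α₂ α₃` make a simple function of θ and φ.
-/

open Real

lemma minkowski_smul_add_smul_self (a b : ℝ) (u v : Fin 4 → ℝ) :
    minkowski (a • u + b • v) (a • u + b • v) =
      a ^ 2 * minkowski u u + 2 * a * b * minkowski u v + b ^ 2 * minkowski v v := by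
  simp only [minkowski, Pi.add_apply, Pi.smul_apply, smul_eq_mul]
  ring

lemma minkowski_smul_add_smul_self_of_null {u v : Fin 4 → ℝ} (hu : minkowski u u = 0)
    (hv : minkowski v v = 0) (a b : ℝ) :
    minkowski (a • u + b • v) (a • u + b • v) = 2 * a * b * minkowski u v := by
  rw [minkowski_smul_add_smul_self, hu, hv]
  ring

lemma I3_smul_of_null {u₁ u₂ u₃ : Fin 4 → ℝ} (h₁ : u₁ 0 = -1) (h₂ : u₂ 0 = -1) (h₃ : u₃ 0 = -1)
    (hu₁ : minkowski u₁ u₁ = 0) (hu₂ : minkowski u₂ u₂ = 0) (hu₃ : minkowski u₃ u₃ = 0)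
    (a₁ a₂ a₃ : ℝ) :
    I3 (a₁ • u₁) (a₂ • u₂) (a₃ • u₃) =
      (a₁ + a₂ + a₃) * ((a₁ + a₂) / (2 * a₁ * a₂ * minkowski u₁ u₂)
        + (a₁ + a₃) / (2 * a₁ * a₃ * minkowski u₁ u₃)
        + (a₂ + a₃) / (2 * a₂ * a₃ * minkowski u₂ u₃)) := by
  simp only [I3, minkowski_smul_add_smul_self_of_null hu₁ hu₂,
    minkowski_smul_add_smul_self_of_null hu₁ hu₃, minkowski_smul_add_smul_self_of_null hu₂ hu₃,
    Pi.smul_apply, smul_eq_mul, h₁, h₂, h₃]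
  ring

noncomputable def nullVector (t : ℝ) : Fin 4 → ℝ := ![-1, cos t, sin t, 0]

lemma nullVector_apply_zero (t : ℝ) : nullVector t 0 = -1 := rfl

lemma minkowski_nullVector (s t : ℝ) :
    minkowski (nullVector s) (nullVector t) = cos (s - t) - 1 := by
  simp [minkowski, nullVector, cos_sub]
  ring

lemma minkowski_nullVector_self (t : ℝ) : minkowski (nullVector t) (nullVector t) = 0 := by
  simp [minkowski_nullVector]

lemma cos_ne_one_of_sin_ne_zero_s7 {θ : ℝ} (hθ : sin θ ≠ 0) : cos θ ≠ 1 :=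
  fun h ↦ hθ (sin_eq_zero_iff_cos_eq.mpr (.inl h))

lemma add_div_two_mul_mul {a b : ℝ} (ha : a ≠ 0) (hb : b ≠ 0) (d : ℝ) :
    (a + b) / (2 * a * b * d) = (a⁻¹ + b⁻¹) / (2 * d) := by
  field_simp
  ring

lemma I3_rational_form_eq {θ φ α₂ α₃ : ℝ} (hθ : sin θ ≠ 0) (hφθ : cos φ + cos θ ≠ 0)
    (hα₂ : α₂ = (1 + cos φ) * sin θ + (1 - cos θ) * sin φ)
    (hα₃ : α₃ = (1 + cos φ) * sin θ - (1 - cos θ) * sin φ) (h₂ : α₂ ≠ 0) (h₃ : α₃ ≠ 0) :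
    let α₁ : ℝ := -2 * sin θ * (cos φ + cos θ)
    (α₁ + α₂ + α₃) * ((α₁ + α₂) / (2 * α₁ * α₂ * (cos θ - 1))
      + (α₁ + α₃) / (2 * α₁ * α₃ * (cos θ - 1)) + (α₂ + α₃) / (2 * α₂ * α₃ * (-2 * sin θ ^ 2)))
      = -(2 * cos θ + 1) / (2 * (cos φ + cos θ)) := by
  intro α₁
  have hα₁ : α₁ ≠ 0 := by simp [α₁, hθ, hφθ]
  have hcos₁ : cos θ - 1 ≠ 0 := sub_ne_zero.mpr (cos_ne_one_of_sin_ne_zero_s7 hθ)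
  have hcos₂ : 1 - cos θ ≠ 0 := sub_ne_zero.mpr (cos_ne_one_of_sin_ne_zero_s7 hθ).symm
  have hsum : α₁ + α₂ + α₃ = 2 * sin θ * (1 - cos θ) := by simp only [α₁, hα₂, hα₃]; ring
  have hprod : α₂ * α₃ = 2 * (1 + cos φ) * (1 - cos θ) * (cos φ + cos θ) := by
    rw [hα₂, hα₃]
    linear_combination (1 + cos φ) ^ 2 * sin_sq_add_cos_sq θ - (1 - cos θ) ^ 2 * sin_sq_add_cos_sq φ
  have hφ : 1 + cos φ ≠ 0 := fun h ↦ mul_ne_zero h₂ h₃ (by rw [hprod, h]; ring)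
  have hinv : α₂⁻¹ + α₃⁻¹ = sin θ / ((1 - cos θ) * (cos φ + cos θ)) := by
    rw [inv_add_inv h₂ h₃, hprod, show α₂ + α₃ = 2 * (1 + cos φ) * sin θ by rw [hα₂, hα₃]; ring]
    field_simp
  rw [hsum, add_div_two_mul_mul hα₁ h₂, add_div_two_mul_mul hα₁ h₃, add_div_two_mul_mul h₂ h₃,
    show ∀ x y z d e : ℝ, (x + y) / (2 * d) + (x + z) / (2 * d) + (y + z) / (2 * e)
      = (2 * x + (y + z)) / (2 * d) + (y + z) / (2 * e) by intros; ring, hinv]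
  simp only [α₁]
  field_simp
  linear_combination 2 * sin_sq_add_cos_sq θ

/-- The explicit evaluation of I₃ in the proof of Lemma 6.1. -/
theorem I3_value
    (θ φ : ℝ) (hθ : Real.sin θ ≠ 0) (hφθ : Real.cos φ + Real.cos θ ≠ 0)
    (α₂ α₃ : ℝ)
    (hα₂ : α₂ = (1 + Real.cos φ) * Real.sin θ + (1 - Real.cos θ) * Real.sin φ)
    (hα₃ : α₃ = (1 + Real.cos φ) * Real.sin θ - (1 - Real.cos θ) * Real.sin φ)
    (h₂ : α₂ ≠ 0) (h₃ : α₃ ≠ 0) :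
    let α₁ : ℝ := -2 * Real.sin θ * (Real.cos φ + Real.cos θ)
    let ζ₁ : Fin 4 → ℝ := α₁ • ![-1, 1, 0, 0]
    let ζ₂ : Fin 4 → ℝ := α₂ • ![-1, Real.cos θ, Real.sin θ, 0]
    let ζ₃ : Fin 4 → ℝ := α₃ • ![-1, Real.cos θ, -Real.sin θ, 0]
    (minkowski (ζ₁ + ζ₂) (ζ₁ + ζ₂) ≠ 0 ∧
     minkowski (ζ₁ + ζ₃) (ζ₁ + ζ₃) ≠ 0 ∧
     minkowski (ζ₂ + ζ₃) (ζ₂ + ζ₃) ≠ 0) ∧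
    I3 ζ₁ ζ₂ ζ₃
      = -(2 * Real.cos θ + 1) / (2 * (Real.cos φ + Real.cos θ)) := by
  intro α₁ ζ₁ ζ₂ ζ₃
  have hζ₁ : ζ₁ = α₁ • nullVector 0 := by simp [ζ₁, nullVector]
  have hζ₂ : ζ₂ = α₂ • nullVector θ := rfl
  have hζ₃ : ζ₃ = α₃ • nullVector (-θ) := by simp [ζ₃, nullVector]
  have hα₁ : α₁ ≠ 0 := by simp [α₁, hθ, hφθ]
  have hcos : cos θ - 1 ≠ 0 := sub_ne_zero.mpr (cos_ne_one_of_sin_ne_zero_s7 hθ)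
  have hcos_two_mul : cos (θ + θ) - 1 = -2 * sin θ ^ 2 := by
    rw [← two_mul, cos_two_mul, cos_sq']
    ring
  simp only [hζ₁, hζ₂, hζ₃, I3_smul_of_null (nullVector_apply_zero _) (nullVector_apply_zero _)
    (nullVector_apply_zero _) (minkowski_nullVector_self _) (minkowski_nullVector_self _)
    (minkowski_nullVector_self _), minkowski_smul_add_smul_self_of_null
    (minkowski_nullVector_self _) (minkowski_nullVector_self _), minkowski_nullVector, zero_sub,
    zero_add, cos_neg, sub_neg_eq_add, hcos_two_mul]
  exact ⟨⟨by simp [hα₁, h₂, hcos], by simp [hα₁, h₃, hcos], by simp [h₂, h₃, hθ]⟩,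
    I3_rational_form_eq hθ hφθ hα₂ hα₃ h₂ h₃⟩
end

section
/- Let φ ∈ ℝ with cos φ ≠ 1/2, and set ζ = (−1, −cos φ, sin φ, 0) ∈ ℝ⁴ (a lightlike vector). Then there exist two triples (ζ^{1,k}, ζ^{2,k}, ζ^{3,k}), k = 1, 2, of nonzero lightlike vectors in ℝ⁴ such that for each k: ζ^{1,k} + ζ^{2,k} + ζ^{3,k} = ζ, η(ζ^{j,k} + ζ^{i,k}, ζ^{j,k} + ζ^{i,k}) ≠ 0 for every pair i ≠ j, and moreover I₃(ζ^{1,1}, ζ^{2,1}, ζ^{3,1}) ≠ I₃(ζ^{1,2}, ζ^{2,2}, ζ^{3,2}); equivalently, the two vectors (1, I₃(ζ^{1,k}, ζ^{2,k}, ζ^{3,k})) ∈ ℝ², k = 1, 2, are linearly independent. (Coordinate version of Lemma 6.1: two decompositions of a lightlike covector into three lightlike covectors with distinct values of I₃.) -/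
/-!
Write ζ = (−1, u) with u = (a, b, 0) a unit vector, and let e = (0, 0, 0, 1).
For lightlike x, y one has η(x + y, x + y) = 2 η(x, y), so all the data entering I₃ are
the mutual products of the three summands. Two explicit splittings then work:
(1, u) + (−1, −e) + (−1, e), with I₃ = −1/2, and −½(1, u) + 2(1, e) + (−5/2, 3u/2, −2e),
with I₃ = −5/4.
-/

@[simp]
lemma minkowski_vecCons_s8 (t x y w t' x' y' w' : ℝ) :
    minkowski ![t, x, y, w] ![t', x', y', w'] = -(t * t') + x * x' + y * y' + w * w' := by
  simp [minkowski]

lemma minkowski_add_self (x y : Fin 4 → ℝ) :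
    minkowski (x + y) (x + y) = minkowski x x + 2 * minkowski x y + minkowski y y := by
  simp only [minkowski, Pi.add_apply]; ring

lemma IsLightlike.minkowski_add_self {x y : Fin 4 → ℝ} (hx : IsLightlike x) (hy : IsLightlike y) :
    minkowski (x + y) (x + y) = 2 * minkowski x y := by
  rw [_root_.minkowski_add_self, hx.2, hy.2]; ring

lemma isLightlike_vecCons_s8 {t x y w : ℝ} (ht : t ≠ 0) (h : x ^ 2 + y ^ 2 + w ^ 2 = t ^ 2) :
    IsLightlike ![t, x, y, w] :=
  ⟨fun h₀ => ht (by simpa using congrFun h₀ 0),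
    by simp only [minkowski_vecCons_s8]; linear_combination h⟩

lemma I3_of_isLightlike {z₁ z₂ z₃ : Fin 4 → ℝ}
    (h₁ : IsLightlike z₁) (h₂ : IsLightlike z₂) (h₃ : IsLightlike z₃) :
    I3 z₁ z₂ z₃ = (z₁ 0 + z₂ 0 + z₃ 0) *
      ((z₁ 0 + z₂ 0) / (2 * minkowski z₁ z₂) + (z₁ 0 + z₃ 0) / (2 * minkowski z₁ z₃)
        + (z₂ 0 + z₃ 0) / (2 * minkowski z₂ z₃)) := by
  rw [I3, h₁.minkowski_add_self h₂, h₁.minkowski_add_self h₃, h₂.minkowski_add_self h₃]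

structure IsLightlikeSplitting (ζ : Fin 4 → ℝ) (z : Fin 3 → Fin 4 → ℝ) : Prop where
  lightlike : ∀ j, IsLightlike (z j)
  sum_eq : z 0 + z 1 + z 2 = ζ
  minkowski_add_self_ne_zero : ∀ i j, i ≠ j → minkowski (z i + z j) (z i + z j) ≠ 0

lemma linearIndependent_one_vecCons_iff {K : Type*} [Field K] (x y : K) :
    LinearIndependent K ![![1, x], ![1, y]] ↔ x ≠ y := by
  rw [LinearIndependent.pair_iff]
  constructor
  · rintro h rfl
    simpa using h 1 (-1) (by simp)
  · intro hxy s t hst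
    have h₀ : s + t = 0 := by simpa using congrFun hst 0
    have h₁ : s * x + t * y = 0 := by simpa using congrFun hst 1
    have ht : t * (y - x) = 0 := by linear_combination h₁ - x * h₀
    have ht : t = 0 := (mul_eq_zero.mp ht).resolve_right (sub_ne_zero.mpr hxy.symm)
    exact ⟨by linear_combination h₀ - ht, ht⟩

section

variable {a b : ℝ}

def splitting₁ (a b : ℝ) : Fin 3 → Fin 4 → ℝ :=
  ![![1, a, b, 0], ![-1, 0, 0, -1], ![-1, 0, 0, 1]]

noncomputable def splitting₂ (a b : ℝ) : Fin 3 → Fin 4 → ℝ :=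
  ![![-1 / 2, -a / 2, -b / 2, 0], ![2, 0, 0, 2], ![-5 / 2, 3 * a / 2, 3 * b / 2, -2]]

lemma isLightlike_splitting₁ (hab : a ^ 2 + b ^ 2 = 1) (j : Fin 3) :
    IsLightlike (splitting₁ a b j) := by
  fin_cases j <;> refine isLightlike_vecCons_s8 (by norm_num) ?_ <;> linarith

lemma isLightlike_splitting₂ (hab : a ^ 2 + b ^ 2 = 1) (j : Fin 3) :
    IsLightlike (splitting₂ a b j) := by
  fin_cases j <;> refine isLightlike_vecCons_s8 (by norm_num) ?_ <;> linarith

lemma isLightlikeSplitting_splitting₁ (hab : a ^ 2 + b ^ 2 = 1) :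
    IsLightlikeSplitting ![-1, a, b, 0] (splitting₁ a b) where
  lightlike := isLightlike_splitting₁ hab
  sum_eq := by simp [splitting₁]
  minkowski_add_self_ne_zero i j hij := by
    rw [(isLightlike_splitting₁ hab i).minkowski_add_self (isLightlike_splitting₁ hab j)]
    fin_cases i <;> fin_cases j <;> simp [splitting₁] at hij ⊢

lemma isLightlikeSplitting_splitting₂ (hab : a ^ 2 + b ^ 2 = 1) :
    IsLightlikeSplitting ![-1, a, b, 0] (splitting₂ a b) where
  lightlike := isLightlike_splitting₂ hab
  sum_eq := by ext i; fin_cases i <;> simp [splitting₂] <;> ring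
  minkowski_add_self_ne_zero i j hij := by
    rw [(isLightlike_splitting₂ hab i).minkowski_add_self (isLightlike_splitting₂ hab j)]
    fin_cases i <;> fin_cases j <;> simp [splitting₂] at hij ⊢ <;> nlinarith

lemma I3_splitting₁ (hab : a ^ 2 + b ^ 2 = 1) :
    I3 (splitting₁ a b 0) (splitting₁ a b 1) (splitting₁ a b 2) = -1 / 2 := by
  rw [I3_of_isLightlike (isLightlike_splitting₁ hab 0) (isLightlike_splitting₁ hab 1)
    (isLightlike_splitting₁ hab 2)]
  simp [splitting₁]
  norm_num

lemma I3_splitting₂ (hab : a ^ 2 + b ^ 2 = 1) :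
    I3 (splitting₂ a b 0) (splitting₂ a b 1) (splitting₂ a b 2) = -5 / 4 := by
  have h₀₂ : minkowski (splitting₂ a b 0) (splitting₂ a b 2) = -2 := by
    simp [splitting₂]; linear_combination (-3 / 4 : ℝ) * hab
  rw [I3_of_isLightlike (isLightlike_splitting₂ hab 0) (isLightlike_splitting₂ hab 1)
    (isLightlike_splitting₂ hab 2), h₀₂]
  simp [splitting₂]
  norm_num

theorem exists_lightlikeSplittings_I3_ne (hab : a ^ 2 + b ^ 2 = 1) :
    ∃ z w : Fin 3 → Fin 4 → ℝ,
      IsLightlikeSplitting ![-1, a, b, 0] z ∧ IsLightlikeSplitting ![-1, a, b, 0] w ∧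
        I3 (z 0) (z 1) (z 2) ≠ I3 (w 0) (w 1) (w 2) :=
  ⟨splitting₁ a b, splitting₂ a b, isLightlikeSplitting_splitting₁ hab,
    isLightlikeSplitting_splitting₂ hab, by rw [I3_splitting₁ hab, I3_splitting₂ hab]; norm_num⟩

end

theorem exists_two_triples_distinct_I3_general
    (φ : ℝ) :
    let ζ : Fin 4 → ℝ := ![-1, -Real.cos φ, Real.sin φ, 0]
    ∃ z : Fin 2 → Fin 3 → (Fin 4 → ℝ),
      (∀ k : Fin 2, ∀ j : Fin 3, IsLightlike (z k j)) ∧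
      (∀ k : Fin 2, z k 0 + z k 1 + z k 2 = ζ) ∧
      (∀ k : Fin 2, ∀ i j : Fin 3, i ≠ j →
        minkowski (z k i + z k j) (z k i + z k j) ≠ 0) ∧
      I3 (z 0 0) (z 0 1) (z 0 2) ≠ I3 (z 1 0) (z 1 1) (z 1 2) ∧
      LinearIndependent ℝ
        ![(![1, I3 (z 0 0) (z 0 1) (z 0 2)] : Fin 2 → ℝ),
          (![1, I3 (z 1 0) (z 1 1) (z 1 2)] : Fin 2 → ℝ)] := by
  intro ζ
  obtain ⟨z, w, hz, hw, hI3⟩ := exists_lightlikeSplittings_I3_ne (a := -Real.cos φ)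
    (b := Real.sin φ) (by rw [neg_sq, Real.cos_sq_add_sin_sq])
  refine ⟨![z, w], ?_, ?_, ?_, hI3, (linearIndependent_one_vecCons_iff _ _).mpr hI3⟩
  · exact Fin.forall_fin_two.mpr ⟨hz.lightlike, hw.lightlike⟩
  · exact Fin.forall_fin_two.mpr ⟨hz.sum_eq, hw.sum_eq⟩
  · exact Fin.forall_fin_two.mpr ⟨hz.minkowski_add_self_ne_zero, hw.minkowski_add_self_ne_zero⟩

/-- Coordinate version of Lemma 6.1: two decompositions of a lightlike vector
into three lightlike vectors with distinct values of I₃. -/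
theorem exists_two_triples_distinct_I3
    (φ : ℝ) (hφ : Real.cos φ ≠ 1 / 2) :
    let ζ : Fin 4 → ℝ := ![-1, -Real.cos φ, Real.sin φ, 0]
    ∃ z : Fin 2 → Fin 3 → (Fin 4 → ℝ),
      (∀ k : Fin 2, ∀ j : Fin 3, IsLightlike (z k j)) ∧
      (∀ k : Fin 2, z k 0 + z k 1 + z k 2 = ζ) ∧
      (∀ k : Fin 2, ∀ i j : Fin 3, i ≠ j →
        minkowski (z k i + z k j) (z k i + z k j) ≠ 0) ∧
      I3 (z 0 0) (z 0 1) (z 0 2) ≠ I3 (z 1 0) (z 1 1) (z 1 2) ∧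
      LinearIndependent ℝ
        ![(![1, I3 (z 0 0) (z 0 1) (z 0 2)] : Fin 2 → ℝ),
          (![1, I3 (z 1 0) (z 1 1) (z 1 2)] : Fin 2 → ℝ)] :=
  exists_two_triples_distinct_I3_general φ
end
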